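/- Let Ī ⊊ ℂ[x₁,…,xₙ] be a proper monomial ideal. Call a pair (b, σ), with b ∈ ℕⁿ and σ ⊆ {1,…,n}, a standard pair of Ī if: supp(b) ∩ σ = ∅; for every k ∈ ℕ, x^b · (∏_{j∈σ} x_j)^k ∉ Ī (x^b mod Ī is not (∏_{j∈σ} x_j)-torsion); and for every l ∉ σ there is k ∈ ℕ with x^b · (x_l · ∏_{j∈σ} x_j)^k ∈ Ī (x^b mod Ī is x_l(∏_{j∈σ} x_j)-torsion for all l ∉ σ). Then Ī admits the irreducible decomposition Ī = ⋂_{(b,σ) standard pair of Ī} ⟨ x_j^{b_j+1} : j ∉ σ ⟩, the intersection of the monomial ideals generated by the powers x_j^{b_j+1} for j outside σ, taken over all standard pairs of Ī. -/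
import Mathlib


open MvPolynomial

open Classical in
lemma exists_pair_aux {n : ℕ} (S : Set (Fin n → ℕ)) (u : Fin n → ℕ)
    (hu : ¬ ∃ v ∈ S, ∀ j, v j ≤ u j) :
    ∃ (b : Fin n → ℕ) (σ : Finset (Fin n)),
      (∀ j ∉ σ, b j = u j) ∧ (∀ j ∈ σ, b j = 0) ∧
      (∀ k : ℕ, ¬ ∃ v ∈ S, ∀ j, v j ≤ b j + k * (if j ∈ σ then 1 else 0)) ∧
      (∀ l ∉ σ, ∃ k : ℕ, ∃ v ∈ S, ∀ j,
        v j ≤ b j + k * ((if j ∈ σ then 1 else 0) + (if j = l then 1 else 0))) := by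
  classical
  set P : Finset (Fin n) → Prop :=
    fun σ => ∀ k : ℕ, ¬ ∃ v ∈ S, ∀ j, v j ≤ u j + k * (if j ∈ σ then 1 else 0) with hP
  have hPempty : P ∅ := by
    intro k hk
    exact hu (by simpa using hk)
  have hF : (Finset.univ.filter (fun σ : Finset (Fin n) => P σ)).Nonempty :=
    ⟨∅, Finset.mem_filter.mpr ⟨Finset.mem_univ _, hPempty⟩⟩
  obtain ⟨σ, hσF, hσmax⟩ := Finset.exists_max_image _ Finset.card hF
  have hPσ : P σ := (Finset.mem_filter.mp hσF).2
  refine ⟨fun j => if j ∈ σ then 0 else u j, σ, fun j hj => by simp [hj],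
    fun j hj => by simp [hj], ?_, ?_⟩
  · intro k hk
    obtain ⟨v, hv, hle⟩ := hk
    refine hPσ k ⟨v, hv, fun j => ?_⟩
    have := hle j
    by_cases hj : j ∈ σ <;> simp [hj] at this ⊢ <;> omega
  · intro l hl
    have hPτ : ¬ P (insert l σ) := by
      intro hPτ
      have hmem : insert l σ ∈ Finset.univ.filter (fun σ : Finset (Fin n) => P σ) :=
        Finset.mem_filter.mpr ⟨Finset.mem_univ _, hPτ⟩
      have := hσmax _ hmem
      rw [Finset.card_insert_of_notMem hl] at this
      omega
    obtain ⟨k₀, hk₀⟩ := not_forall.mp hPτ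
    obtain ⟨v, hv, hle⟩ := not_not.mp hk₀
    refine ⟨Finset.univ.sup v, v, hv, fun j => ?_⟩
    have hk : v j ≤ Finset.univ.sup v := Finset.le_sup (Finset.mem_univ j)
    have := hle j
    by_cases hj : j ∈ σ
    · have hjl : j ≠ l := fun h => hl (h ▸ hj)
      simp [hj, hjl] at this ⊢
      omega
    · by_cases hjl : j = l
      · subst hjl
        simp [hj] at this ⊢
        omega
      · simp [hj, hjl] at this ⊢
        omega

open Classical in
/-- `(b,σ)` is a standard pair of the monomial ideal `I`: the support of `b` avoids `σ`,
`x^b` is not `(∏_{j∈σ} x_j)`-torsion modulo `I`, and for every `l ∉ σ` it is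
`x_l·(∏_{j∈σ} x_j)`-torsion modulo `I`. -/
def IsStandardPair {n : ℕ} (I : Ideal (MvPolynomial (Fin n) ℂ))
    (b : Fin n → ℕ) (σ : Set (Fin n)) : Prop :=
  (∀ j, b j ≠ 0 → j ∉ σ) ∧
  (∀ k : ℕ,
    monomial (Finsupp.equivFunOnFinite.symm fun j => b j + k * (if j ∈ σ then 1 else 0))
      (1 : ℂ) ∉ I) ∧
  (∀ l ∉ σ, ∃ k : ℕ,
    monomial (Finsupp.equivFunOnFinite.symm
        fun j => b j + k * ((if j ∈ σ then 1 else 0) + (if j = l then 1 else 0)))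
      (1 : ℂ) ∈ I)

/-- every proper monomial ideal is the intersection, over its standard pairs
`(b,σ)`, of the irreducible monomial ideals `⟨x_j^{b_j+1} : j ∉ σ⟩`. -/
theorem standard_pair_decomposition
    {n : ℕ} (I : Ideal (MvPolynomial (Fin n) ℂ)) (hproper : I ≠ ⊤)
    (hmono : ∃ S : Set (Fin n → ℕ), I = Ideal.span
      {p | ∃ v ∈ S, p = monomial (Finsupp.equivFunOnFinite.symm v) (1 : ℂ)}) :
    I = sInf {J | ∃ (b : Fin n → ℕ) (σ : Set (Fin n)), IsStandardPair I b σ ∧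
      J = Ideal.span {p | ∃ j ∉ σ, p = X j ^ (b j + 1)}} := by
  classical
  obtain ⟨S, hS⟩ := hmono
  -- membership criterion for I
  have hIset : {p : MvPolynomial (Fin n) ℂ | ∃ v ∈ S,
      p = monomial (Finsupp.equivFunOnFinite.symm v) (1 : ℂ)}
      = (fun s => monomial s (1:ℂ)) '' (⇑Finsupp.equivFunOnFinite.symm '' S) := by
    ext q
    constructor
    · rintro ⟨v, hv, rfl⟩; exact ⟨_, ⟨v, hv, rfl⟩, rfl⟩
    · rintro ⟨w, ⟨v, hv, rfl⟩, rfl⟩; exact ⟨v, hv, rfl⟩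
  have hIm : ∀ p : MvPolynomial (Fin n) ℂ,
      p ∈ I ↔ ∀ u ∈ p.support, ∃ v ∈ S, ∀ j, v j ≤ u j := by
    intro p
    rw [hS, hIset, mem_ideal_span_monomial_image]
    refine forall₂_congr fun u hu => ?_
    constructor
    · rintro ⟨si, ⟨v, hv, rfl⟩, h2⟩
      exact ⟨v, hv, fun j => by simpa using h2 j⟩
    · rintro ⟨v, hv, h⟩
      exact ⟨Finsupp.equivFunOnFinite.symm v, ⟨v, hv, rfl⟩,
        fun j => by simpa using h j⟩
  have hmonoI : ∀ u : Fin n → ℕ,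
      monomial (Finsupp.equivFunOnFinite.symm u) (1:ℂ) ∈ I ↔ ∃ v ∈ S, ∀ j, v j ≤ u j := by
    intro u
    rw [hIm]
    simp only [support_monomial, one_ne_zero, if_false, Finset.mem_singleton, forall_eq]
    refine exists_congr fun v => and_congr_right fun _ => forall_congr' fun j => ?_
    simp
  -- membership criterion for the J's
  have hJm : ∀ (b : Fin n → ℕ) (σ : Set (Fin n)) (p : MvPolynomial (Fin n) ℂ),
      p ∈ Ideal.span {p : MvPolynomial (Fin n) ℂ | ∃ j ∉ σ, p = X j ^ (b j + 1)} ↔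
        ∀ u ∈ p.support, ∃ j ∉ σ, b j + 1 ≤ u j := by
    intro b σ p
    have hset : {p : MvPolynomial (Fin n) ℂ | ∃ j ∉ σ, p = X j ^ (b j + 1)}
        = (fun s => monomial s (1:ℂ)) '' {w | ∃ j ∉ σ, w = Finsupp.single j (b j + 1)} := by
      ext q
      constructor
      · rintro ⟨j, hj, rfl⟩; exact ⟨_, ⟨j, hj, rfl⟩, X_pow_eq_monomial.symm⟩
      · rintro ⟨w, ⟨j, hj, rfl⟩, rfl⟩; exact ⟨j, hj, X_pow_eq_monomial.symm⟩
    rw [hset, mem_ideal_span_monomial_image]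
    refine forall₂_congr fun u hu => ?_
    constructor
    · rintro ⟨w, ⟨j, hj, rfl⟩, hle⟩; exact ⟨j, hj, Finsupp.single_le_iff.mp hle⟩
    · rintro ⟨j, hj, h⟩; exact ⟨_, ⟨j, hj, rfl⟩, Finsupp.single_le_iff.mpr h⟩
  refine le_antisymm (le_sInf ?_) ?_
  · -- I ≤ each J
    rintro J ⟨b, σ, ⟨hsupp, hnt, ht⟩, rfl⟩
    intro p hp
    rw [hJm]
    intro u hu
    by_contra hcon
    push_neg at hcon
    obtain ⟨v, hv, hvu⟩ := (hIm p).mp hp u hu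
    refine hnt (Finset.univ.sup u) ?_
    rw [hmonoI]
    refine ⟨v, hv, fun j => ?_⟩
    have h1 : v j ≤ u j := hvu j
    have h2 : u j ≤ Finset.univ.sup ⇑u := Finset.le_sup (Finset.mem_univ j)
    by_cases hj : j ∈ σ
    · simp only [hj, if_true]
      omega
    · have := hcon j hj
      simp only [hj, if_false]
      omega
  · -- sInf ≤ I
    intro p hp
    rw [hIm]
    intro u hu
    by_contra hcon
    obtain ⟨b, σf, hboff, hbon, hc2, hc3⟩ := exists_pair_aux S ⇑u hcon
    have hsp : IsStandardPair I b (↑σf : Set (Fin n)) := by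
      refine ⟨fun j hbj hj => hbj (hbon j (by simpa using hj)), ?_, ?_⟩
      · intro k hk
        rw [hmonoI] at hk
        refine hc2 k ?_
        obtain ⟨v, hv, hle⟩ := hk
        refine ⟨v, hv, fun j => ?_⟩
        have := hle j
        by_cases hj : j ∈ σf <;> simp [hj] at this ⊢ <;> omega
      · intro l hl
        have hl' : l ∉ σf := by simpa using hl
        obtain ⟨k, v, hv, hle⟩ := hc3 l hl'
        refine ⟨k, ?_⟩
        rw [hmonoI]
        refine ⟨v, hv, fun j => ?_⟩
        have := hle j
        by_cases hj : j ∈ σf <;> by_cases hjl : j = l <;>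
          simp [hj, hjl] at this ⊢ <;> omega
    have hpJ : p ∈ Ideal.span
        {q : MvPolynomial (Fin n) ℂ | ∃ j ∉ (↑σf : Set (Fin n)), q = X j ^ (b j + 1)} :=
      (Ideal.mem_sInf.mp hp) ⟨b, ↑σf, hsp, rfl⟩
    obtain ⟨j, hj, hle⟩ := (hJm b ↑σf p).mp hpJ u hu
    have hj' : j ∉ σf := by simpa using hj
    have := hboff j hj'
    omega
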